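/- arXiv:2006.05100 — 5 statements merged into one kernel-verified Lean document; each statement's English description precedes it below -/
import Mathlib

section
/- Let G be a finite group and H a normal subgroup of G. If H is a perfect code in some Cayley graph of G, then for every pair of integers a, b with 0 ≤ a ≤ |H| − 1 and 0 ≤ b ≤ |H| such that gcd(2, |H|−1) divides a, there exists an inverse-closed subset S of G \ {e} such that H is an (a,b)-regular set in Cay(G,S). -/
/-- The Cayley graph of a group `G` with connection set `S`:
`x` is adjacent to `y` iff `y * x⁻¹ ∈ S` (symmetrized; for inverse-closed `S`
not containing `1` this is the usual Cayley graph). -/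
def cayley {G : Type*} [Group G] (S : Set G) : SimpleGraph G :=
  SimpleGraph.fromRel (fun x y => y * x⁻¹ ∈ S)

/-- `C` is an `(a,b)`-regular set in `Γ`: every vertex in `C` has exactly `a`
neighbors in `C`, and every vertex outside `C` has exactly `b` neighbors in `C`. -/
def IsRegularSet {V : Type*} (Γ : SimpleGraph V) (C : Set V) (a b : ℕ) : Prop :=
  (∀ v ∈ C, (Γ.neighborSet v ∩ C).ncard = a) ∧
  (∀ v ∉ C, (Γ.neighborSet v ∩ C).ncard = b)

/-!
Since `x ~ y` iff `y * x⁻¹ ∈ S`, the neighbours of `v` inside `H` correspond to the elements of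
`S` in the coset `H v⁻¹`. So `H` is `(a,b)`-regular in `Cay(G,S)` exactly when `S` has `a`
elements in `H` and `b` elements in every other coset, and `S` is inverse-closed iff it is
invariant under the involution `x ↦ x⁻¹`, which maps the coset `q` onto `q⁻¹`. For `q ≠ q⁻¹`
take any `b` elements of `q` together with their inverses. On a self-inverse coset an
inversion-invariant subset of a given size exists as soon as that size is even or inversion
has a fixed point there. For `H \ {1}` this fixed point comes from Cauchy's theorem when `|H|`
is even (otherwise `a` is even); for `q ≠ 1` it is the unique element of `S₀ ∩ q` given by the
perfect code.
-/

open Finset Function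

namespace Finset

variable {α : Type*} [DecidableEq α] {ψ : α → α}

theorem exists_invariant_subset_card_of_even (hψ : Involutive ψ) {n : ℕ} (hn : Even n) :
    ∀ {s : Finset α}, (∀ x ∈ s, ψ x ∈ s) → n ≤ s.card →
      ∃ t ⊆ s, t.card = n ∧ ∀ x ∈ t, ψ x ∈ t := by
  obtain ⟨k, rfl⟩ := hn
  induction k with
  | zero => exact fun _ _ => ⟨∅, empty_subset _, rfl, by simp⟩
  | succ k ih =>
    intro s hs hn
    by_cases hfix : ∀ x ∈ s, ψ x = x
    · obtain ⟨t, hts, htc⟩ := exists_subset_card_eq hn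
      exact ⟨t, hts, htc, fun x hx => (hfix x (hts hx)).symm ▸ hx⟩
    push Not at hfix
    obtain ⟨y, hy, hyy⟩ := hfix
    have hp : {y, ψ y} ⊆ s := insert_subset hy (singleton_subset_iff.2 (hs y hy))
    have hpi : ∀ x ∈ ({y, ψ y} : Finset α), ψ x ∈ ({y, ψ y} : Finset α) := by
      simp only [mem_insert, mem_singleton]
      rintro x (rfl | rfl) <;> simp [hψ _]
    have hsi : ∀ x ∈ s \ {y, ψ y}, ψ x ∈ s \ {y, ψ y} := fun x hx => by
      rw [mem_sdiff] at hx ⊢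
      exact ⟨hs x hx.1, fun h => hx.2 (hψ x ▸ hpi _ h)⟩
    have hcard : k + k ≤ (s \ {y, ψ y}).card := by
      rw [card_sdiff_of_subset hp, card_pair (Ne.symm hyy)]; omega
    obtain ⟨t, hts, htc, hti⟩ := ih hsi hcard
    refine ⟨{y, ψ y} ∪ t, union_subset hp (hts.trans sdiff_subset), ?_, ?_⟩
    · rw [card_union_of_disjoint (disjoint_of_subset_right hts disjoint_sdiff),
        card_pair (Ne.symm hyy), htc]
      omega
    · simp only [mem_union]
      rintro x (hx | hx)
      exacts [Or.inl (hpi x hx), Or.inr (hti x hx)]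

theorem exists_invariant_subset_card (hψ : Involutive ψ) {s : Finset α}
    (hs : ∀ x ∈ s, ψ x ∈ s) {n : ℕ} (hn : n ≤ s.card) (hfix : Even n ∨ ∃ x ∈ s, ψ x = x) :
    ∃ t ⊆ s, t.card = n ∧ ∀ x ∈ t, ψ x ∈ t := by
  rcases Nat.even_or_odd n with he | ho
  · exact exists_invariant_subset_card_of_even hψ he hs hn
  obtain ⟨x, hx, hxx⟩ := hfix.resolve_left (Nat.not_even_iff_odd.mpr ho)
  have hsi : ∀ z ∈ s.erase x, ψ z ∈ s.erase x := fun z hz => by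
    rw [mem_erase] at hz ⊢
    exact ⟨fun h => hz.1 (by rw [← hψ z, h, hxx]), hs z hz.2⟩
  obtain ⟨t, hts, htc, hti⟩ := exists_invariant_subset_card_of_even hψ
    (Nat.Odd.sub_odd ho odd_one) hsi (by rw [card_erase_of_mem hx]; omega)
  refine ⟨insert x t, insert_subset hx (hts.trans (erase_subset x s)), ?_, ?_⟩
  · rw [card_insert_of_notMem fun h => by simpa using hts h, htc]
    have := ho.pos
    omega
  · simp only [mem_insert]
    rintro z (rfl | hz)
    exacts [Or.inl hxx, Or.inr (hti z hz)]

theorem exists_invariant_subset_card_fiber {β : Type*} [DecidableEq β] {ι : β → β} {π : α → β}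
    (hψ : Involutive ψ) (hι : Involutive ι)
    (hπ : ∀ x, π (ψ x) = ι (π x)) {X : Finset α} (hX : ∀ x ∈ X, ψ x ∈ X) (n : β → ℕ)
    (hn : ∀ q, n (ι q) = n q) (hcard : ∀ q, n q ≤ (X.filter (π · = q)).card)
    (hfix : ∀ q, ι q = q → Even (n q) ∨ ∃ x ∈ X, π x = q ∧ ψ x = x) :
    ∃ U ⊆ X, (∀ x ∈ U, ψ x ∈ U) ∧ ∀ q, (U.filter (π · = q)).card = n q := by
  have hfiber : ∀ q, ∀ x ∈ X.filter (π · = q), ψ x ∈ X.filter (π · = ι q) := fun q x hx => by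
    rw [mem_filter] at hx ⊢
    exact ⟨hX x hx.1, hx.2 ▸ hπ x⟩
  have hpart : ∀ q, ∃ t ⊆ X.filter (π · = q), t.card = n q ∧ (ι q = q → ∀ x ∈ t, ψ x ∈ t) := by
    intro q
    by_cases hq : ι q = q
    · have hfix' : Even (n q) ∨ ∃ x ∈ X.filter (π · = q), ψ x = x := by
        simpa [and_assoc] using hfix q hq
      obtain ⟨t, hts, htc, hti⟩ :=
        exists_invariant_subset_card hψ (fun x hx => hq ▸ hfiber q x hx) (hcard q) hfix'
      exact ⟨t, hts, htc, fun _ => hti⟩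
    · obtain ⟨t, hts, htc⟩ := exists_subset_card_eq (hcard q)
      exact ⟨t, hts, htc, fun h => absurd h hq⟩
  choose t hts htc hti using hpart
  -- An arbitrary linear order on `β` picks in each pair `q ≠ ι q` the index whose part is chosen
  -- freely; the other part is its mirror image under `ψ`.
  let _ : LinearOrder β := IsWellOrder.linearOrder WellOrderingRel
  let T : β → Finset α := fun q => if q ≤ ι q then t q else (t (ι q)).image ψ
  have hT_sub : ∀ q, T q ⊆ X.filter (π · = q) := by
    intro q
    by_cases hq : q ≤ ι q
    · simpa [T, hq] using hts q
    · simp only [T, hq, if_false, image_subset_iff]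
      exact fun x hx => hι q ▸ hfiber _ x (hts _ hx)
  have hT_card : ∀ q, (T q).card = n q := by
    intro q
    by_cases hq : q ≤ ι q
    · simp [T, hq, htc]
    · simp [T, hq, card_image_of_injective _ hψ.injective, htc, hn]
  have hT_inv : ∀ q, ∀ x ∈ T q, ψ x ∈ T (ι q) := by
    intro q x hx
    rcases lt_trichotomy q (ι q) with hlt | heq | hgt
    · simp only [T, hlt.le, not_le.2 hlt, hι q, if_true, if_false] at hx ⊢
      exact mem_image_of_mem ψ hx
    · rw [← heq]
      simp only [T, heq.le, if_true] at hx ⊢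
      exact hti q heq.symm x hx
    · simp only [T, not_le.2 hgt, hgt.le, hι q, if_true, if_false, mem_image] at hx ⊢
      obtain ⟨y, hy, rfl⟩ := hx
      rwa [hψ y]
  refine ⟨X.filter fun x => x ∈ T (π x), filter_subset _ _, fun x hx => ?_, fun q => ?_⟩
  · rw [mem_filter] at hx ⊢
    exact ⟨hX x hx.1, hπ x ▸ hT_inv _ x hx.2⟩
  · have : (X.filter fun x => x ∈ T (π x)).filter (π · = q) = T q := by
      ext x
      simp only [mem_filter]
      refine ⟨fun ⟨⟨_, hx⟩, hq⟩ => hq ▸ hx, fun hx => ?_⟩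
      have := mem_filter.1 (hT_sub q hx)
      exact ⟨⟨this.1, this.2 ▸ hx⟩, this.2⟩
    rw [this, hT_card]

end Finset

section Cayley

variable {G : Type*} [Group G]

theorem cayley_neighborSet_inter {S : Set G} (hS : S⁻¹ = S) (h1 : (1 : G) ∉ S) (C : Set G)
    (v : G) : (cayley S).neighborSet v ∩ C = (· * v) '' {z | z ∈ S ∧ z * v ∈ C} := by
  ext y
  simp only [Set.mem_inter_iff, SimpleGraph.mem_neighborSet, cayley, SimpleGraph.fromRel_adj,
    Set.mem_image]
  constructor
  · rintro ⟨⟨-, h | h⟩, hC⟩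
    · exact ⟨y * v⁻¹, ⟨h, by simpa⟩, by simp⟩
    · refine ⟨y * v⁻¹, ⟨?_, by simpa⟩, by simp⟩
      rwa [← hS, Set.mem_inv, mul_inv_rev, inv_inv]
  · rintro ⟨z, ⟨hzS, hzC⟩, rfl⟩
    refine ⟨⟨fun h => h1 ?_, Or.inl (by simpa)⟩, hzC⟩
    rwa [← mul_eq_right.1 h.symm]

theorem ncard_cayley_neighborSet_inter_subgroup {S : Set G} (hS : S⁻¹ = S) (h1 : (1 : G) ∉ S)
    (H : Subgroup G) [H.Normal] (v : G) :
    ((cayley S).neighborSet v ∩ H).ncard = {z | z ∈ S ∧ (z : G ⧸ H) = (v : G ⧸ H)⁻¹}.ncard := by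
  rw [cayley_neighborSet_inter hS h1, Set.ncard_image_of_injective _ (mul_left_injective v)]
  congr! 3 with z
  rw [SetLike.mem_coe, ← QuotientGroup.eq_one_iff, QuotientGroup.mk_mul, mul_eq_one_iff_eq_inv]

theorem isRegularSet_cayley_subgroup {S : Set G} (hS : S⁻¹ = S) (h1 : (1 : G) ∉ S)
    (H : Subgroup G) [H.Normal] {a b : ℕ} (ha : {z | z ∈ S ∧ (z : G ⧸ H) = 1}.ncard = a)
    (hb : ∀ q : G ⧸ H, q ≠ 1 → {z | z ∈ S ∧ (z : G ⧸ H) = q}.ncard = b) :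
    IsRegularSet (cayley S) H a b := by
  refine ⟨fun v hv => ?_, fun v hv => ?_⟩ <;> rw [ncard_cayley_neighborSet_inter_subgroup hS h1]
  · rwa [(QuotientGroup.eq_one_iff v).2 hv, inv_one]
  · exact hb _ (by simpa [QuotientGroup.eq_one_iff] using hv)

theorem exists_mk_eq_inv_eq_of_ncard_eq_one {S : Set G} (hS : S⁻¹ = S)
    (h1 : (1 : G) ∉ S) (H : Subgroup G) [H.Normal]
    (hS₁ : ∀ v ∉ (H : Set G), ((cayley S).neighborSet v ∩ H).ncard = 1) {q : G ⧸ H}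
    (hq : q ≠ 1) (hqq : q⁻¹ = q) : ∃ x : G, (x : G ⧸ H) = q ∧ x⁻¹ = x := by
  obtain ⟨v, rfl⟩ := QuotientGroup.mk_surjective q
  have hv : v ∉ H := fun h => hq ((QuotientGroup.eq_one_iff v).2 h)
  have hcount := hS₁ v hv
  rw [ncard_cayley_neighborSet_inter_subgroup hS h1, hqq, Set.ncard_eq_one] at hcount
  obtain ⟨x, hx⟩ := hcount
  have hxS : x ∈ {z | z ∈ S ∧ (z : G ⧸ H) = v} := by rw [hx]; rfl
  refine ⟨x, hxS.2, ?_⟩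
  have : x⁻¹ ∈ {z | z ∈ S ∧ (z : G ⧸ H) = v} :=
    ⟨by rw [← hS, Set.inv_mem_inv]; exact hxS.1, by rw [QuotientGroup.mk_inv, hxS.2, hqq]⟩
  rwa [hx] at this

end Cayley

namespace Subgroup

variable {G : Type*} [Group G] (H : Subgroup G)

theorem card_filter_mk_eq [Fintype G] [DecidableEq (G ⧸ H)] (q : G ⧸ H) :
    (univ.filter fun x : G => (x : G ⧸ H) = q).card = Nat.card H := by
  classical
  obtain ⟨g, rfl⟩ := QuotientGroup.mk_surjective q
  have hmk : ∀ x : G, (x : G ⧸ H) = g ↔ g⁻¹ * x ∈ H := fun x => eq_comm.trans QuotientGroup.eq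
  calc (univ.filter fun x : G => (x : G ⧸ H) = g).card
      = (univ.filter (· ∈ H)).card := by
        simp only [hmk]
        refine card_nbij' (g⁻¹ * ·) (g * ·) ?_ ?_ ?_ ?_ <;> intro x <;> simp
    _ = Nat.card H := by rw [← Fintype.card_subtype, Nat.card_eq_fintype_card]

theorem card_filter_erase_one_mk_eq [H.Normal] [Fintype G] [DecidableEq G] [DecidableEq (G ⧸ H)]
    (q : G ⧸ H) : ((univ.erase 1).filter fun x : G => (x : G ⧸ H) = q).card =
      if q = 1 then Nat.card H - 1 else Nat.card H := by
  rw [filter_erase]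
  split_ifs with hq
  · rw [card_erase_of_mem (by simp [hq]), H.card_filter_mk_eq]
  · rw [erase_eq_of_notMem (by simp [Ne.symm hq]), H.card_filter_mk_eq]

theorem exists_ne_one_inv_eq_of_even_card [Finite H] (h : Even (Nat.card H)) :
    ∃ x ∈ H, x ≠ 1 ∧ x⁻¹ = x := by
  have : Fact (Nat.Prime 2) := ⟨Nat.prime_two⟩
  obtain ⟨x, hx⟩ := exists_prime_orderOf_dvd_card' 2 h.two_dvd
  refine ⟨x, x.2, fun h1 => by rw [OneMemClass.coe_eq_one] at h1; simp [h1] at hx, ?_⟩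
  rw [inv_eq_iff_mul_eq_one, ← pow_two, ← hx, ← Subgroup.coe_pow, pow_orderOf_eq_one,
    OneMemClass.coe_one]

theorem even_or_exists_ne_one_inv_eq [Finite H] {a : ℕ} (ha : Nat.gcd 2 (Nat.card H - 1) ∣ a) :
    Even a ∨ ∃ x ∈ H, x ≠ 1 ∧ x⁻¹ = x := by
  rcases Nat.even_or_odd (Nat.card H) with he | ho
  · exact Or.inr (H.exists_ne_one_inv_eq_of_even_card he)
  · rw [Nat.gcd_eq_left (Nat.Odd.sub_odd ho odd_one).two_dvd] at ha
    exact Or.inl (even_iff_two_dvd.2 ha)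

end Subgroup

theorem stmt4 {G : Type*} [Group G] [Fintype G] (H : Subgroup G) [H.Normal]
    (hpc : ∃ S₀ : Set G, S₀⁻¹ = S₀ ∧ (1 : G) ∉ S₀ ∧
      IsRegularSet (cayley S₀) (H : Set G) 0 1)
    (a b : ℕ) (ha : a ≤ Nat.card H - 1) (hb : b ≤ Nat.card H)
    (hdvd : Nat.gcd 2 (Nat.card H - 1) ∣ a) :
    ∃ S : Set G, S⁻¹ = S ∧ (1 : G) ∉ S ∧
      IsRegularSet (cayley S) (H : Set G) a b := by
  classical
  obtain ⟨S₀, hS₀, h1S₀, -, hS₀₁⟩ := hpc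
  let n : G ⧸ H → ℕ := fun q => if q = 1 then a else b
  have hcard : ∀ q : G ⧸ H, n q ≤ ((univ.erase 1).filter fun x : G => (x : G ⧸ H) = q).card :=
    fun q => by rw [H.card_filter_erase_one_mk_eq]; simp only [n]; split_ifs <;> assumption
  have hfix : ∀ q : G ⧸ H, q⁻¹ = q →
      Even (n q) ∨ ∃ x : G, x ∈ univ.erase 1 ∧ (x : G ⧸ H) = q ∧ x⁻¹ = x := by
    intro q hqq
    by_cases hq : q = 1
    · subst hq
      simpa [n, QuotientGroup.eq_one_iff, and_left_comm] using H.even_or_exists_ne_one_inv_eq hdvd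
    · obtain ⟨x, rfl, hx⟩ := exists_mk_eq_inv_eq_of_ncard_eq_one hS₀ h1S₀ H hS₀₁ hq hqq
      exact Or.inr ⟨x, mem_erase.2 ⟨fun h => hq (h ▸ QuotientGroup.mk_one H), mem_univ x⟩, rfl, hx⟩
  obtain ⟨U, hU1, hUinv, hUcard⟩ := exists_invariant_subset_card_fiber (ψ := (·⁻¹ : G → G))
    (ι := (·⁻¹)) inv_involutive inv_involutive (fun _ => QuotientGroup.mk_inv _ _)
    (fun x hx => by simpa using hx) n (fun q => by simp [n]) hcard hfix
  have hUcard' : ∀ q : G ⧸ H, {z | z ∈ (U : Set G) ∧ (z : G ⧸ H) = q}.ncard = n q := fun q => by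
    rw [← hUcard, ← Set.ncard_coe_finset, coe_filter]
    rfl
  have hUinv' : (U : Set G)⁻¹ = U := Set.ext fun x => ⟨fun hx => inv_inv x ▸ hUinv _ hx, hUinv x⟩
  have hU1' : (1 : G) ∉ (U : Set G) := fun h => by simpa using hU1 h
  refine ⟨U, hUinv', hU1', isRegularSet_cayley_subgroup hUinv' hU1' H ?_ fun q hq => ?_⟩
  · simpa [n] using hUcard' 1
  · simpa [n, hq] using hUcard' q
end

section
/- Let G be a finite group and H a non-trivial normal subgroup of G. Then H is a perfect code in some Cayley graph of G if and only if for every pair of integers a, b with 0 ≤ a ≤ |H| − 1, 0 ≤ b ≤ |H| and gcd(2,|H|−1) dividing a, H is an (a,b)-regular set in some Cayley graph of G. -/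
section InvolutiveInv

variable {α : Type*} [InvolutiveInv α] {C : Set α}

lemma Set.sdiff_inv (s t : Set α) : (s \ t)⁻¹ = s⁻¹ \ t⁻¹ :=
  Set.preimage_sdiff _ s t

lemma Set.inv_pair_inv (x : α) : ({x, x⁻¹} : Set α)⁻¹ = {x, x⁻¹} := by
  simp [Set.pair_comm]

lemma Set.inv_mem_of_inv_eq (hC : C⁻¹ = C) {x : α} (hx : x ∈ C) : x⁻¹ ∈ C := by
  rw [← hC, Set.mem_inv, inv_inv]
  exact hx

lemma Set.exists_inv_eq_subset_ncard_eq_two (hC : C⁻¹ = C) (h2 : 2 ≤ C.ncard) :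
    ∃ D ⊆ C, D⁻¹ = D ∧ D.ncard = 2 := by
  obtain ⟨x, y, hx, hy, hxy⟩ :=
    (Set.one_lt_ncard_iff (Set.finite_of_ncard_pos (by omega))).1 h2
  by_cases hx' : x⁻¹ = x
  · by_cases hy' : y⁻¹ = y
    · exact ⟨{x, y}, Set.pair_subset hx hy, by simp [hx', hy'], Set.ncard_pair hxy⟩
    · exact ⟨{y, y⁻¹}, Set.pair_subset hy (Set.inv_mem_of_inv_eq hC hy), Set.inv_pair_inv y,
        Set.ncard_pair (Ne.symm hy')⟩
  · exact ⟨{x, x⁻¹}, Set.pair_subset hx (Set.inv_mem_of_inv_eq hC hx), Set.inv_pair_inv x,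
      Set.ncard_pair (Ne.symm hx')⟩

theorem Set.exists_inv_eq_subset_ncard_eq (hC : C⁻¹ = C) {b : ℕ} (hb : b ≤ C.ncard)
    (hodd : Odd b → ∃ s ∈ C, s⁻¹ = s) : ∃ B ⊆ C, B⁻¹ = B ∧ B.ncard = b := by
  induction b using Nat.twoStepInduction generalizing C with
  | zero => exact ⟨∅, Set.empty_subset C, by simp, Set.ncard_empty α⟩
  | one =>
    obtain ⟨s, hs, hss⟩ := hodd odd_one
    exact ⟨{s}, Set.singleton_subset_iff.2 hs, by simp [hss], Set.ncard_singleton s⟩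
  | more b ih _ =>
    have hfin : C.Finite := Set.finite_of_ncard_pos (by omega)
    have hodd' : Odd b → ∃ s ∈ C, s⁻¹ = s := fun h => hodd (by simpa [Nat.odd_add] using h)
    obtain ⟨D, hDC, hD, hDcard, hodd_diff⟩ : ∃ D ⊆ C, D⁻¹ = D ∧ D.ncard = 2 ∧
        (Odd b → ∃ s ∈ C \ D, s⁻¹ = s) := by
      by_cases hb_odd : Odd b
      · obtain ⟨s, hs, hss⟩ := hodd' hb_odd
        obtain ⟨D, hDC, hD, hDcard⟩ := Set.exists_inv_eq_subset_ncard_eq_two (C := C \ {s})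
          (by rw [Set.sdiff_inv, hC, Set.inv_singleton, hss]) (by
            have := hb_odd.pos; rw [Set.ncard_sdiff_singleton_of_mem hs]; omega)
        exact ⟨D, hDC.trans Set.sdiff_subset, hD, hDcard,
          fun _ => ⟨s, ⟨hs, fun hsD => (hDC hsD).2 rfl⟩, hss⟩⟩
      · obtain ⟨D, hDC, hD, hDcard⟩ := Set.exists_inv_eq_subset_ncard_eq_two hC (by omega)
        exact ⟨D, hDC, hD, hDcard, fun h => absurd h hb_odd⟩
    obtain ⟨B, hBC, hB, hBcard⟩ := ih (C := C \ D) (by rw [Set.sdiff_inv, hC, hD])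
      (by rw [Set.ncard_sdiff hDC (hfin.subset hDC)]; omega) hodd_diff
    refine ⟨B ∪ D, Set.union_subset (hBC.trans Set.sdiff_subset) hDC,
      by rw [Set.union_inv, hB, hD], ?_⟩
    rw [Set.ncard_union_eq (Set.disjoint_sdiff_left.mono_left hBC)
      (hfin.subset (hBC.trans Set.sdiff_subset)) (hfin.subset hDC), hBcard, hDcard]

end InvolutiveInv

lemma exists_inv_equivariant_choice {Q β : Type*} [InvolutiveInv Q] [InvolutiveInv β]
    (P : Q → β → Prop) (hP : ∀ q B, P q B → P q⁻¹ B⁻¹)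
    (hB : ∀ q, ∃ B, P q B ∧ (q⁻¹ = q → B⁻¹ = B)) :
    ∃ T : Q → β, (∀ q, P q (T q)) ∧ ∀ q, T q⁻¹ = (T q)⁻¹ := by
  choose B hPB hBinv using hB
  obtain ⟨_, -⟩ := exists_wellFoundedLT Q
  -- On each pair `{q, q⁻¹}` the choice made at the smaller element determines the other.
  refine ⟨fun q => if q⁻¹ < q then (B q⁻¹)⁻¹ else B q, fun q => ?_, fun q => ?_⟩
  · dsimp only
    split_ifs
    · simpa using hP _ _ (hPB q⁻¹)
    · exact hPB q
  · rcases lt_trichotomy q⁻¹ q with h | h | h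
    · simp [h, h.not_gt]
    · simp [h, hBinv q h]
    · simp [h, h.not_gt]

section Cayley

variable {G : Type*} [Group G] {S : Set G}

lemma cayley_adj_iff (hS : S⁻¹ = S) (h1 : (1 : G) ∉ S) {x y : G} :
    (cayley S).Adj x y ↔ y * x⁻¹ ∈ S := by
  have hS' : x * y⁻¹ ∈ S ↔ y * x⁻¹ ∈ S := by
    rw [show x * y⁻¹ = (y * x⁻¹)⁻¹ by group, ← Set.mem_inv, hS]
  simp only [cayley, SimpleGraph.fromRel_adj, hS', or_self, and_iff_right_iff_imp]
  rintro h rfl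
  exact h1 (by simpa using h)

lemma cayley_neighborSet (hS : S⁻¹ = S) (h1 : (1 : G) ∉ S) (x : G) :
    (cayley S).neighborSet x = (· * x) '' S := by
  ext y
  simp [cayley_adj_iff hS h1, Set.image_mul_right]

lemma ncard_cayley_neighborSet_inter (hS : S⁻¹ = S) (h1 : (1 : G) ∉ S) (C : Set G) (x : G) :
    ((cayley S).neighborSet x ∩ C).ncard = (S ∩ (· * x) ⁻¹' C).ncard := by
  rw [cayley_neighborSet hS h1, ← Set.image_inter_preimage,
    Set.ncard_image_of_injective _ (mul_left_injective x)]

variable {H : Subgroup G} [H.Normal]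

lemma QuotientGroup.preimage_singleton_one :
    QuotientGroup.mk ⁻¹' ({1} : Set (G ⧸ H)) = (H : Set G) :=
  QuotientGroup.preimage_mk_one H

lemma QuotientGroup.preimage_mul_right_subgroup (x : G) :
    (· * x) ⁻¹' (H : Set G) = QuotientGroup.mk ⁻¹' {(x : G ⧸ H)⁻¹} := by
  ext s
  simp [← QuotientGroup.eq_one_iff, mul_eq_one_iff_eq_inv]

theorem isRegularSet_cayley_subgroup_iff (hS : S⁻¹ = S) (h1 : (1 : G) ∉ S) {a b : ℕ} :
    IsRegularSet (cayley S) H a b ↔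
      (S ∩ H).ncard = a ∧
        ∀ q : G ⧸ H, q ≠ 1 → (S ∩ QuotientGroup.mk ⁻¹' {q}).ncard = b := by
  simp only [IsRegularSet, ncard_cayley_neighborSet_inter hS h1,
    QuotientGroup.preimage_mul_right_subgroup]
  constructor
  · rintro ⟨hin, hout⟩
    refine ⟨by simpa [QuotientGroup.preimage_singleton_one] using hin 1 H.one_mem,
      fun q hq => ?_⟩
    obtain ⟨x, hx⟩ := QuotientGroup.mk_surjective q⁻¹
    rw [← inv_inv q, ← hx]
    exact hout x (by simpa [← QuotientGroup.eq_one_iff, hx] using hq)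
  · rintro ⟨hin, hout⟩
    refine ⟨fun v hv => ?_, fun v hv => hout _ (by simpa [QuotientGroup.eq_one_iff] using hv)⟩
    rwa [(QuotientGroup.eq_one_iff v).2 hv, inv_one, QuotientGroup.preimage_singleton_one]

end Cayley

lemma Subgroup.exists_inv_eq_self_of_gcd_dvd_odd {G : Type*} [Group G] {H : Subgroup G}
    [Finite H] {a : ℕ} (hgcd : Nat.gcd 2 (Nat.card H - 1) ∣ a) (ha : Odd a) :
    ∃ s ∈ (H : Set G) \ {1}, s⁻¹ = s := by
  have htwo : 2 ∣ Nat.card H := by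
    have hpos : 0 < Nat.card H := Nat.card_pos
    have : ¬ 2 ∣ Nat.card H - 1 := fun h =>
      Nat.not_even_iff_odd.2 ha (even_iff_two_dvd.2 ((Nat.gcd_eq_left h) ▸ hgcd))
    omega
  have : Fact (Nat.Prime 2) := ⟨Nat.prime_two⟩
  obtain ⟨s, hs⟩ := exists_prime_orderOf_dvd_card' 2 htwo
  refine ⟨s, ⟨s.2, fun h => ?_⟩, congrArg Subtype.val (inv_eq_self_of_orderOf_eq_two hs)⟩
  have : s = 1 := Subtype.ext h
  simp [this] at hs

section Fibers

variable {G : Type*} [Group G] {H : Subgroup G}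

lemma QuotientGroup.ncard_preimage_singleton (q : G ⧸ H) :
    (QuotientGroup.mk ⁻¹' {q} : Set G).ncard = Nat.card H := by
  rw [← Nat.card_coe_set_eq, QuotientGroup.card_preimage_mk]
  simp

variable [H.Normal]

lemma QuotientGroup.inv_preimage_singleton (q : G ⧸ H) :
    (QuotientGroup.mk ⁻¹' {q} : Set G)⁻¹ = QuotientGroup.mk ⁻¹' {q⁻¹} := by
  ext g
  simp [inv_eq_iff_eq_inv]

lemma QuotientGroup.one_notMem_preimage_singleton {q : G ⧸ H} (hq : q ≠ 1) :
    (1 : G) ∉ (QuotientGroup.mk ⁻¹' {q} : Set G) :=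
  fun h => hq (h.symm.trans (QuotientGroup.mk_one H))

theorem exists_isRegularSet_cayley_of_fibers {T : G ⧸ H → Set G}
    (hT : ∀ q, T q ⊆ QuotientGroup.mk ⁻¹' {q} \ {1}) (hTinv : ∀ q, T q⁻¹ = (T q)⁻¹)
    {a b : ℕ} (ha : (T 1).ncard = a) (hb : ∀ q ≠ 1, (T q).ncard = b) :
    ∃ S : Set G, S⁻¹ = S ∧ (1 : G) ∉ S ∧ IsRegularSet (cayley S) H a b := by
  set S : Set G := {g | g ∈ T g}
  have hS_fiber (q : G ⧸ H) : S ∩ QuotientGroup.mk ⁻¹' {q} = T q := by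
    ext g
    constructor
    · rintro ⟨hg, rfl : (g : G ⧸ H) = q⟩
      exact hg
    · intro hg
      have hgq : (g : G ⧸ H) = q := (hT q hg).1
      exact ⟨show g ∈ T g by rwa [hgq], hgq⟩
  have hS_inv : S⁻¹ = S := by
    ext g
    simp [S, Set.mem_inv, hTinv]
  have hS_one : (1 : G) ∉ S := fun h => (hT 1 h).2 rfl
  refine ⟨S, hS_inv, hS_one, (isRegularSet_cayley_subgroup_iff hS_inv hS_one).2 ⟨?_, ?_⟩⟩
  · rw [← QuotientGroup.preimage_singleton_one, hS_fiber, ha]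
  · intro q hq
    rw [hS_fiber, hb q hq]

theorem exists_inv_eq_self_mem_preimage_singleton_of_isRegularSet_zero_one {S : Set G}
    (hS : S⁻¹ = S) (h1 : (1 : G) ∉ S) (hcode : IsRegularSet (cayley S) H 0 1) {q : G ⧸ H}
    (hq : q ≠ 1) (hqq : q⁻¹ = q) :
    ∃ s ∈ (QuotientGroup.mk ⁻¹' {q} : Set G), s⁻¹ = s := by
  obtain ⟨s, hs⟩ :=
    Set.ncard_eq_one.1 (((isRegularSet_cayley_subgroup_iff hS h1).1 hcode).2 q hq)
  have hinv : (S ∩ QuotientGroup.mk ⁻¹' {q})⁻¹ = S ∩ QuotientGroup.mk ⁻¹' {q} := by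
    rw [Set.inter_inv, hS, QuotientGroup.inv_preimage_singleton, hqq]
  have hsS : s ∈ S ∩ QuotientGroup.mk ⁻¹' {q} := hs ▸ rfl
  rw [hs, Set.inv_singleton, Set.singleton_eq_singleton_iff] at hinv
  exact ⟨s, hsS.2, hinv⟩

lemma QuotientGroup.inv_preimage_singleton_sdiff_one (q : G ⧸ H) :
    (QuotientGroup.mk ⁻¹' {q} \ {1} : Set G)⁻¹ = QuotientGroup.mk ⁻¹' {q⁻¹} \ {1} := by
  rw [Set.sdiff_inv, QuotientGroup.inv_preimage_singleton, Set.inv_singleton, inv_one]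

theorem exists_subset_preimage_singleton_sdiff_one [Finite H] {a b : ℕ}
    (ha : a ≤ Nat.card H - 1) (hb : b ≤ Nat.card H) (hgcd : Nat.gcd 2 (Nat.card H - 1) ∣ a)
    (hinvol : ∀ q : G ⧸ H, q ≠ 1 → q⁻¹ = q →
      ∃ s ∈ (QuotientGroup.mk ⁻¹' {q} : Set G), s⁻¹ = s)
    (q : G ⧸ H) :
    ∃ B : Set G, (B ⊆ QuotientGroup.mk ⁻¹' {q} \ {1} ∧
      (q = 1 → B.ncard = a) ∧ (q ≠ 1 → B.ncard = b)) ∧ (q⁻¹ = q → B⁻¹ = B) := by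
  rcases eq_or_ne q 1 with rfl | hq
  · have hC := QuotientGroup.inv_preimage_singleton_sdiff_one (1 : G ⧸ H)
    rw [inv_one, QuotientGroup.preimage_singleton_one] at hC
    obtain ⟨B, hBC, hB, hBcard⟩ := Set.exists_inv_eq_subset_ncard_eq hC
      (by rw [Set.ncard_sdiff_singleton_of_mem H.one_mem, ← Nat.card_coe_set_eq]; exact ha)
      (Subgroup.exists_inv_eq_self_of_gcd_dvd_odd hgcd)
    exact ⟨B, ⟨by rwa [QuotientGroup.preimage_singleton_one], fun _ => hBcard,
      fun h => absurd rfl h⟩, fun _ => hB⟩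
  · rw [Set.sdiff_singleton_eq_self (QuotientGroup.one_notMem_preimage_singleton hq)]
    have hbC := (QuotientGroup.ncard_preimage_singleton q).symm ▸ hb
    by_cases hqq : q⁻¹ = q
    · obtain ⟨B, hBC, hB, hBcard⟩ := Set.exists_inv_eq_subset_ncard_eq
        (by rw [QuotientGroup.inv_preimage_singleton, hqq]) hbC (fun _ => hinvol q hq hqq)
      exact ⟨B, ⟨hBC, fun h => absurd h hq, fun _ => hBcard⟩, fun _ => hB⟩
    · obtain ⟨B, hBC, hBcard⟩ := Set.exists_subset_card_eq hbC
      exact ⟨B, ⟨hBC, fun h => absurd h hq, fun _ => hBcard⟩, fun h => absurd h hqq⟩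

end Fibers

theorem stmt5_general {G : Type*} [Group G] [Fintype G] (H : Subgroup G) [H.Normal] :
    (∃ S₀ : Set G, S₀⁻¹ = S₀ ∧ (1 : G) ∉ S₀ ∧
        IsRegularSet (cayley S₀) (H : Set G) 0 1) ↔
      (∀ a b : ℕ, a ≤ Nat.card H - 1 → b ≤ Nat.card H →
        Nat.gcd 2 (Nat.card H - 1) ∣ a →
        ∃ S : Set G, S⁻¹ = S ∧ (1 : G) ∉ S ∧
          IsRegularSet (cayley S) (H : Set G) a b) := by
  refine ⟨fun ⟨S₀, hS₀, h1₀, hcode⟩ a b ha hb hgcd => ?_,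
    fun h => h 0 1 (Nat.zero_le _) Nat.card_pos (Nat.gcd 2 _).dvd_zero⟩
  obtain ⟨T, hT, hTinv⟩ := exists_inv_equivariant_choice
    (fun (q : G ⧸ H) (B : Set G) => B ⊆ QuotientGroup.mk ⁻¹' {q} \ {1} ∧
      (q = 1 → B.ncard = a) ∧ (q ≠ 1 → B.ncard = b))
    (fun q B ⟨hBq, hB1, hB⟩ =>
      ⟨QuotientGroup.inv_preimage_singleton_sdiff_one q ▸ Set.inv_subset_inv.2 hBq,
        by simpa using hB1, by simpa using hB⟩)
    (exists_subset_preimage_singleton_sdiff_one ha hb hgcd fun _ hq hqq =>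
      exists_inv_eq_self_mem_preimage_singleton_of_isRegularSet_zero_one hS₀ h1₀ hcode hq hqq)
  exact exists_isRegularSet_cayley_of_fibers (fun q => (hT q).1) hTinv
    ((hT 1).2.1 rfl) fun q hq => (hT q).2.2 hq

theorem stmt5 {G : Type*} [Group G] [Fintype G] (H : Subgroup G) [H.Normal]
    (hnt : H ≠ ⊥) :
    (∃ S₀ : Set G, S₀⁻¹ = S₀ ∧ (1 : G) ∉ S₀ ∧
        IsRegularSet (cayley S₀) (H : Set G) 0 1) ↔
      (∀ a b : ℕ, a ≤ Nat.card H - 1 → b ≤ Nat.card H →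
        Nat.gcd 2 (Nat.card H - 1) ∣ a →
        ∃ S : Set G, S⁻¹ = S ∧ (1 : G) ∉ S ∧
          IsRegularSet (cayley S) (H : Set G) a b) :=
  stmt5_general H
end

section
/- Let G be a finite group and H a normal subgroup of G. If H is a perfect code in some Cayley graph of G, then for any g ∈ G with g² ∈ H, there exists h ∈ H such that (gh)² = e. -/
theorem stmt7 {G : Type*} [Group G] [Fintype G] (H : Subgroup G) [H.Normal]
    (hpc : ∃ S₀ : Set G, S₀⁻¹ = S₀ ∧ (1 : G) ∉ S₀ ∧
      IsRegularSet (cayley S₀) (H : Set G) 0 1) :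
    ∀ g : G, g ^ 2 ∈ H → ∃ h ∈ H, (g * h) ^ 2 = 1 := by
  obtain ⟨S₀, hinv, h1, hreg0, hreg1⟩ := hpc
  intro g hg
  by_cases hgH : g ∈ H
  · exact ⟨g⁻¹, H.inv_mem hgH, by group⟩
  · have hcard := hreg1 g hgH
    rw [Set.ncard_eq_one] at hcard
    obtain ⟨a, ha⟩ := hcard
    have haMem : a ∈ (cayley S₀).neighborSet g ∩ (H : Set G) := by
      rw [ha]; rfl
    obtain ⟨hadj, haH⟩ := haMem
    have hadj' : g ≠ a ∧ (a * g⁻¹ ∈ S₀ ∨ g * a⁻¹ ∈ S₀) := by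
      simpa [cayley, SimpleGraph.fromRel_adj] using hadj
    have hs : a * g⁻¹ ∈ S₀ := by
      rcases hadj'.2 with h | h
      · exact h
      · have : (a * g⁻¹)⁻¹ ∈ S₀ := by simpa [mul_inv_rev] using h
        rw [← hinv]; simpa using this
    -- consider h' = g * a⁻¹ * g
    have hconj : g * a⁻¹ * g⁻¹ ∈ H := Subgroup.Normal.conj_mem ‹H.Normal› _ (H.inv_mem haH) g
    have hh'H : g * a⁻¹ * g ∈ H := by
      have : (g * a⁻¹ * g⁻¹) * g ^ 2 ∈ H := H.mul_mem hconj hg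
      simpa [pow_two, mul_assoc] using this
    have hh'S : (g * a⁻¹ * g) * g⁻¹ ∈ S₀ := by
      have : (a * g⁻¹)⁻¹ ∈ S₀⁻¹ := Set.inv_mem_inv.mpr hs
      rw [hinv] at this
      simpa [mul_inv_rev, mul_assoc] using this
    have hne : g ≠ g * a⁻¹ * g := fun hEq => hgH (hEq ▸ hh'H)
    have hh'adj : (cayley S₀).Adj g (g * a⁻¹ * g) := by
      rw [cayley, SimpleGraph.fromRel_adj]
      exact ⟨hne, Or.inl hh'S⟩
    have hh'mem : g * a⁻¹ * g ∈ (cayley S₀).neighborSet g ∩ (H : Set G) :=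
      ⟨hh'adj, hh'H⟩
    rw [ha] at hh'mem
    have heq : g * a⁻¹ * g = a := hh'mem
    refine ⟨a⁻¹, H.inv_mem haH, ?_⟩
    have : (g * a⁻¹) * (g * a⁻¹) = 1 := by
      rw [← mul_assoc, heq, mul_inv_cancel]
    simpa [pow_two] using this
end

section
/- Let G be a finite group and H a subgroup of G. If H is an (a,b)-regular set in Cay(G,S) for some inverse-closed subset S of G \ {e} and integers a, b, then H is an (a, |H| − b)-regular set in Cay(G, S'), where S' = (S ∩ H) ∪ (G \ (S ∪ H ∪ {e}))—i.e., the connection set obtained by keeping S ∩ H and complementing the part of S outside H. -/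
theorem stmt10 {G : Type*} [Group G] [Fintype G] (H : Subgroup G) (S : Set G)
    (hS : S⁻¹ = S) (he : (1 : G) ∉ S) (a b : ℕ)
    (hreg : IsRegularSet (cayley S) (H : Set G) a b) :
    IsRegularSet (cayley ((S ∩ (H : Set G)) ∪ (S ∪ (H : Set G) ∪ {1})ᶜ))
      (H : Set G) a (Nat.card H - b) := by
  classical
  obtain ⟨h1, h2⟩ := hreg
  set S' : Set G := (S ∩ (H : Set G)) ∪ (S ∪ (H : Set G) ∪ {1})ᶜ with hS'
  have hsinv : ∀ x : G, x⁻¹ ∈ S ↔ x ∈ S := by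
    intro x
    constructor
    · intro h; rw [← hS]; simpa [Set.mem_inv] using h
    · intro h; rw [← hS] at h; simpa [Set.mem_inv] using h
  have hS'inv : ∀ x : G, x⁻¹ ∈ S' ↔ x ∈ S' := by
    intro x
    simp only [hS', Set.mem_union, Set.mem_inter_iff, Set.mem_compl_iff,
      Set.mem_singleton_iff, SetLike.mem_coe, hsinv, inv_mem_iff, inv_eq_one]
  -- adjacency characterizations
  have hadjS : ∀ x y : G, (cayley S).Adj x y ↔ x ≠ y ∧ y * x⁻¹ ∈ S := by
    intro x y
    simp only [cayley, SimpleGraph.fromRel_adj]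
    constructor
    · rintro ⟨hne, h | h⟩
      · exact ⟨hne, h⟩
      · refine ⟨hne, ?_⟩
        have := (hsinv (x * y⁻¹)).2 h
        simpa [mul_inv_rev] using this
    · rintro ⟨hne, h⟩; exact ⟨hne, Or.inl h⟩
  have hadjS' : ∀ x y : G, (cayley S').Adj x y ↔ x ≠ y ∧ y * x⁻¹ ∈ S' := by
    intro x y
    simp only [cayley, SimpleGraph.fromRel_adj]
    constructor
    · rintro ⟨hne, h | h⟩
      · exact ⟨hne, h⟩
      · refine ⟨hne, ?_⟩
        have := (hS'inv (x * y⁻¹)).2 h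
        simpa [mul_inv_rev] using this
    · rintro ⟨hne, h⟩; exact ⟨hne, Or.inl h⟩
  have hcard : Nat.card H = ((H : Set G)).ncard := by
    rw [← Nat.card_coe_set_eq]
    exact Nat.card_congr (Equiv.refl _)
  constructor
  · intro v hv
    have heq : (cayley S').neighborSet v ∩ (H : Set G)
        = (cayley S).neighborSet v ∩ (H : Set G) := by
      ext w
      simp only [Set.mem_inter_iff, SimpleGraph.mem_neighborSet, hadjS, hadjS']
      constructor
      · rintro ⟨⟨hne, hw⟩, hwH⟩
        refine ⟨⟨hne, ?_⟩, hwH⟩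
        have hmem : w * v⁻¹ ∈ H := H.mul_mem hwH (H.inv_mem hv)
        rcases hw with h | h
        · exact h.1
        · exact absurd (Or.inl (Or.inr hmem)) h
      · rintro ⟨⟨hne, hw⟩, hwH⟩
        have hmem : w * v⁻¹ ∈ H := H.mul_mem hwH (H.inv_mem hv)
        exact ⟨⟨hne, Or.inl ⟨hw, hmem⟩⟩, hwH⟩
    rw [heq]; exact h1 v hv
  · intro v hv
    have heq : (cayley S').neighborSet v ∩ (H : Set G)
        = (H : Set G) \ ((cayley S).neighborSet v ∩ (H : Set G)) := by
      ext w
      simp only [Set.mem_inter_iff, SimpleGraph.mem_neighborSet, hadjS, hadjS',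
        Set.mem_diff]
      constructor
      · rintro ⟨⟨hne, hw⟩, hwH⟩
        refine ⟨hwH, fun hc => ?_⟩
        obtain ⟨⟨-, hs⟩, -⟩ := hc
        rcases hw with h' | h'
        · exact hv (by have := H.mul_mem (H.inv_mem h'.2) hwH
                       simpa [mul_assoc] using this)
        · exact h' (Or.inl (Or.inl hs))
      · rintro ⟨hwH, hns⟩
        have hne : v ≠ w := fun h => hv (by rw [h]; exact hwH)
        have hnsv : w * v⁻¹ ∉ S := fun hs => hns ⟨⟨hne, hs⟩, hwH⟩
        have hnH : w * v⁻¹ ∉ (H : Set G) := by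
          intro hmem
          exact hv (by have := H.mul_mem (H.inv_mem hmem) hwH
                       simpa [mul_assoc] using this)
        have hn1 : w * v⁻¹ ≠ 1 := fun h => hne.symm (by rwa [mul_inv_eq_one] at h)
        refine ⟨⟨hne, Or.inr ?_⟩, hwH⟩
        intro hc
        rcases hc with (hc | hc) | hc
        · exact hnsv hc
        · exact hnH hc
        · exact hn1 hc
    rw [heq, Set.ncard_diff (Set.inter_subset_right) (Set.toFinite _),
      h2 v hv, hcard]
end

section
/- Let H be a finite group of even order and let a be an integer with 0 ≤ a ≤ |H| − 1. Then there exists an inverse-closed subset K of H \ {e} with |K| = a. -/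
theorem stmt12 {H : Type*} [Group H] [Fintype H] (heven : Even (Nat.card H))
    (a : ℕ) (ha : a ≤ Nat.card H - 1) :
    ∃ K : Set H, K⁻¹ = K ∧ (1 : H) ∉ K ∧ K.ncard = a := by
  have hcard : Nat.card H = Fintype.card H := Nat.card_eq_fintype_card
  have : Fact (Nat.Prime 2) := ⟨Nat.prime_two⟩
  obtain ⟨t, ht⟩ : ∃ t : H, orderOf t = 2 :=
    exists_prime_orderOf_dvd_card 2 (by rw [← hcard]; exact heven.two_dvd)
  have ht1 : t ≠ 1 := by
    intro h; rw [h, orderOf_one] at ht; omega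
  have htinv : t⁻¹ = t := by
    have h2 : t * t = 1 := by
      have := pow_orderOf_eq_one t; rw [ht, pow_two] at this; exact this
    exact inv_eq_of_mul_eq_one_left h2
  induction a with
  | zero =>
    exact ⟨∅, by simp, by simp, by simp⟩
  | succ n ih =>
    obtain ⟨K, hKinv, hK1, hKcard⟩ := ih (le_trans (Nat.le_succ n) ha)
    have hmem : ∀ z : H, z⁻¹ ∈ K ↔ z ∈ K := by
      intro z
      nth_rewrite 1 [← hKinv]
      exact Set.inv_mem_inv
    by_cases hx : ∃ x, x ∉ K ∧ x ≠ 1 ∧ x⁻¹ = x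
    · obtain ⟨x, hxK, hx1, hxinv⟩ := hx
      refine ⟨insert x K, ?_, ?_, ?_⟩
      · rw [Set.inv_insert, hxinv, hKinv]
      · simp only [Set.mem_insert_iff, not_or]
        exact ⟨Ne.symm hx1, hK1⟩
      · rw [Set.ncard_insert_of_notMem hxK (Set.toFinite K), hKcard]
    · push_neg at hx
      have htK : t ∈ K := by
        by_contra h
        exact hx t h ht1 htinv
      obtain ⟨y, hy⟩ : ∃ y : H, y ∉ insert 1 K := by
        by_contra h
        push_neg at h
        have huniv : insert (1:H) K = Set.univ := Set.eq_univ_of_forall h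
        have : (insert (1:H) K).ncard = Nat.card H := by
          rw [huniv, Set.ncard_univ]
        rw [Set.ncard_insert_of_notMem hK1 (Set.toFinite K), hKcard] at this
        have hpos : 0 < Nat.card H := Nat.card_pos
        omega
      simp only [Set.mem_insert_iff, not_or] at hy
      obtain ⟨hy1, hyK⟩ := hy
      have hyinv : y⁻¹ ≠ y := hx y hyK hy1
      have hyinvK : y⁻¹ ∉ K := fun h => hyK ((hmem y).mp h)
      have hnpos : 1 ≤ n := by
        have : K.Nonempty := ⟨t, htK⟩
        have := Set.ncard_pos (Set.toFinite K) |>.mpr this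
        omega
      refine ⟨insert y (insert y⁻¹ (K \ {t})), ?_, ?_, ?_⟩
      · ext z
        simp only [Set.mem_inv, Set.mem_insert_iff, Set.mem_diff,
          Set.mem_singleton_iff, hmem z]
        have hzt : z⁻¹ = t ↔ z = t := by
          nth_rewrite 1 [← htinv]; exact inv_inj
        rw [inv_eq_iff_eq_inv, inv_eq_iff_eq_inv, inv_inv]
        simp only [ne_eq, hzt]
        tauto
      · simp only [Set.mem_insert_iff, Set.mem_diff, Set.mem_singleton_iff, not_or]
        refine ⟨Ne.symm hy1, ?_, fun h => hK1 h.1⟩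
        intro h; exact hy1 (inv_eq_one.mp h.symm)
      · have h1 : y⁻¹ ∉ insert y⁻¹ (K \ {t}) → False := by simp
        have hd : (K \ {t}).ncard + 1 = K.ncard :=
          Set.ncard_diff_singleton_add_one htK (Set.toFinite K)
        have hnm1 : y⁻¹ ∉ K \ {t} := fun h => hyinvK h.1
        have hnm2 : y ∉ insert y⁻¹ (K \ {t}) := by
          simp only [Set.mem_insert_iff, Set.mem_diff, Set.mem_singleton_iff, not_or]
          exact ⟨fun h => hyinv h.symm, fun h => hyK h.1⟩
        rw [Set.ncard_insert_of_notMem hnm2 (Set.toFinite _),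
          Set.ncard_insert_of_notMem hnm1 (Set.toFinite _)]
        omega
end
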